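/- Let T be a universal first-order theory with a model companion T*. Then T has the ground interpolation property if and only if T* has the ground interpolation property. -/

import Mathlib

open FirstOrder FirstOrder.Language

universe u v w

namespace PaperFOL

variable {L : FirstOrder.Language.{u, v}}

/-- A sentence is universal: the universal closure of a quantifier-free formula. -/
def IsUniversalSentence (φ : L.Sentence) : Prop :=
  ∃ (n : ℕ) (ψ : L.BoundedFormula Empty n), ψ.IsQF ∧ φ = ψ.alls

/-- The universal fragment `T_∀` of a theory `T`: all universal sentences entailed by `T`. -/
def univFragment (T : L.Theory) : L.Theory :=
  {φ | IsUniversalSentence φ ∧ T ⊨ᵇ φ}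

/-- A sentence `φ` is satisfiable w.r.t. `T`: some model of `T` satisfies `φ`. -/
def SatWith (T : L.Theory) (φ : L.Sentence) : Prop :=
  Theory.IsSatisfiable (T ∪ {φ})

/-- `T` allows quantifier elimination. -/
def HasQE (T : L.Theory) : Prop :=
  ∀ {n : ℕ} (φ : L.BoundedFormula Empty n),
    ∃ ψ : L.BoundedFormula Empty n, ψ.IsQF ∧ T ⊨ᵇ φ.iff ψ

/-- Literals: atomic or negated atomic formulas. -/
inductive IsLiteral {n : ℕ} : L.BoundedFormula Empty n → Prop
  | atom {φ : L.BoundedFormula Empty n} : φ.IsAtomic → IsLiteral φ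
  | negAtom {φ : L.BoundedFormula Empty n} : φ.IsAtomic → IsLiteral φ.not

/-- Clauses: disjunctions of literals. -/
inductive IsClauseFormula {n : ℕ} : L.BoundedFormula Empty n → Prop
  | lit {φ : L.BoundedFormula Empty n} : IsLiteral φ → IsClauseFormula φ
  | sup {φ ψ : L.BoundedFormula Empty n} :
      IsClauseFormula φ → IsLiteral ψ → IsClauseFormula (φ ⊔ ψ)

/-- Two theories over the same signature are co-theories iff they have the same
universal consequences. -/
def CoTheories (T₁ T₂ : L.Theory) : Prop :=
  ∀ φ : L.Sentence, IsUniversalSentence φ → (T₁ ⊨ᵇ φ ↔ T₂ ⊨ᵇ φ)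

/-- The lift of an `L`-theory to the language with additional constants from `α`. -/
def liftT (α : Type w) (T : L.Theory) : (L[[α]]).Theory :=
  (L.lhomWithConstants α).onTheory T

/-- A theory is universal if all its axioms are universal sentences. -/
def IsUniversalTheory (T : L.Theory) : Prop :=
  ∀ φ ∈ T, IsUniversalSentence φ

section Interpolation

/-- `I` is a ground interpolant of `A` and `B` w.r.t. `T`, where `A` is a ground formula with
constants among the shared `Fin nc` and own `Fin na`, `B` with shared `Fin nc` and own `Fin nb`,
and `I` only contains the shared constants `Fin nc`. -/
def IsGroundInterpolant (T : L.Theory) {nc na nb : ℕ}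
    (A : (L[[Fin nc ⊕ Fin na]]).Sentence) (B : (L[[Fin nc ⊕ Fin nb]]).Sentence)
    (I : (L[[Fin nc]]).Sentence) : Prop :=
  I.IsQF ∧
    (liftT (Fin nc ⊕ Fin na) T ∪ {A}) ⊨ᵇ
      ((L.lhomWithConstantsMap (Sum.inl : Fin nc → Fin nc ⊕ Fin na)).onSentence I) ∧
    ¬ Theory.IsSatisfiable (liftT (Fin nc ⊕ Fin nb) T ∪
      {B, (L.lhomWithConstantsMap (Sum.inl : Fin nc → Fin nc ⊕ Fin nb)).onSentence I})

/-- `A ∧ B` is unsatisfiable w.r.t. `T` (in the joint language with all constants). -/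
def JointlyUnsat (T : L.Theory) {nc na nb : ℕ}
    (A : (L[[Fin nc ⊕ Fin na]]).Sentence) (B : (L[[Fin nc ⊕ Fin nb]]).Sentence) : Prop :=
  ¬ Theory.IsSatisfiable (liftT (Fin nc ⊕ (Fin na ⊕ Fin nb)) T ∪
      {(L.lhomWithConstantsMap (Sum.map id Sum.inl)).onSentence A,
       (L.lhomWithConstantsMap (Sum.map id Sum.inr)).onSentence B})

/-- `T` has the ground interpolation property. -/
def GroundInterpolation (T : L.Theory) : Prop :=
  ∀ (nc na nb : ℕ) (A : (L[[Fin nc ⊕ Fin na]]).Sentence) (B : (L[[Fin nc ⊕ Fin nb]]).Sentence),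
    A.IsQF → B.IsQF → JointlyUnsat T A B →
    ∃ I : (L[[Fin nc]]).Sentence, IsGroundInterpolant T A B I

end Interpolation

section Amalgamation

/-- `T` has the amalgamation property. -/
def Amalgamation (T : L.Theory) : Prop :=
  ∀ (A M₁ M₂ : Type w) [L.Structure A] [L.Structure M₁] [L.Structure M₂],
    A ⊨ T → M₁ ⊨ T → M₂ ⊨ T →
    ∀ (f₁ : A ↪[L] M₁) (f₂ : A ↪[L] M₂),
      ∃ (N : Theory.ModelType.{u, v, w} T) (g₁ : M₁ ↪[L] N) (g₂ : M₂ ↪[L] N),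
        ∀ a, g₁ (f₁ a) = g₂ (f₂ a)

/-- `T` has the sub-amalgamation property (the common substructure need not be a model). -/
def SubAmalgamation (T : L.Theory) : Prop :=
  ∀ (A M₁ M₂ : Type w) [L.Structure A] [L.Structure M₁] [L.Structure M₂],
    M₁ ⊨ T → M₂ ⊨ T →
    ∀ (f₁ : A ↪[L] M₁) (f₂ : A ↪[L] M₂),
      ∃ (N : Theory.ModelType.{u, v, w} T) (g₁ : M₁ ↪[L] N) (g₂ : M₂ ↪[L] N),
        ∀ a, g₁ (f₁ a) = g₂ (f₂ a)

/-- `T` has the strong sub-amalgamation property. -/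
def StrongSubAmalgamation (T : L.Theory) : Prop :=
  ∀ (A M₁ M₂ : Type w) [L.Structure A] [L.Structure M₁] [L.Structure M₂],
    M₁ ⊨ T → M₂ ⊨ T →
    ∀ (f₁ : A ↪[L] M₁) (f₂ : A ↪[L] M₂),
      ∃ (N : Theory.ModelType.{u, v, w} T) (g₁ : M₁ ↪[L] N) (g₂ : M₂ ↪[L] N),
        (∀ a, g₁ (f₁ a) = g₂ (f₂ a)) ∧
        (∀ m₁ m₂, g₁ m₁ = g₂ m₂ → ∃ a, m₁ = f₁ a ∧ m₂ = f₂ a)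

end Amalgamation

section ModelCompanion

/-- `T` is model complete: every embedding between models of `T` is elementary. -/
def IsModelComplete (T : L.Theory) : Prop :=
  ∀ (M N : Type w) [L.Structure M] [L.Structure N], M ⊨ T → N ⊨ T →
    ∀ (f : M ↪[L] N) (k : ℕ) (φ : L.Formula (Fin k)) (x : Fin k → M),
      φ.Realize (f ∘ x) ↔ φ.Realize x

/-- `T*` is a model companion of `T`. -/
def IsModelCompanion (T Ts : L.Theory) : Prop :=
  CoTheories T Ts ∧ IsModelComplete.{u, v, w} Ts

/-- The diagram of a structure: all literal sentences (with constants for all elements)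
true in the structure. -/
def diagram (A : Type w) [L.Structure A] : (L[[A]]).Theory :=
  {φ : (L[[A]]).Sentence | IsLiteral φ ∧ A ⊨ φ}

/-- `T*` is a model completion of `T`. -/
def IsModelCompletion (T Ts : L.Theory) : Prop :=
  IsModelCompanion.{u, v, w} T Ts ∧
    ∀ (A : Type w) [L.Structure A], A ⊨ T →
      Theory.IsComplete (liftT A Ts ∪ diagram A)

end ModelCompanion

end PaperFOL

/-!
Ground interpolation only speaks about (un)satisfiability of quantifier-free sentences with
finitely many fresh constants. Reading the constants as variables, `T ∪ {φ}` is unsatisfiable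
exactly when `T` proves the universal sentence `∀ x̄, ¬ φ(x̄)`, and `T ∪ {A} ⊨ I` exactly when
`T` proves `∀ x̄, A(x̄) → I(x̄)`. Hence theories with the same universal consequences, such as
a theory and its model companion, have the same jointly unsatisfiable pairs and the same
ground interpolants.
-/

namespace FirstOrder.Language

variable {L : Language.{u, v}}

namespace BoundedFormula

theorem IsAtomic.mapTermRel {L' : Language} {α β : Type*} {g : ℕ → ℕ}
    {ft : ∀ n, L.Term (α ⊕ Fin n) → L'.Term (β ⊕ Fin (g n))}
    {fr : ∀ n, L.Relations n → L'.Relations n}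
    {h : ∀ n, L'.BoundedFormula β (g (n + 1)) → L'.BoundedFormula β (g n + 1)}
    {n} {φ : L.BoundedFormula α n} (hφ : φ.IsAtomic) : (φ.mapTermRel ft fr h).IsAtomic := by
  cases hφ with
  | equal => exact .equal _ _
  | rel => exact .rel _ _

theorem IsQF.mapTermRel {L' : Language} {α β : Type*} {g : ℕ → ℕ}
    {ft : ∀ n, L.Term (α ⊕ Fin n) → L'.Term (β ⊕ Fin (g n))}
    {fr : ∀ n, L.Relations n → L'.Relations n}
    {h : ∀ n, L'.BoundedFormula β (g (n + 1)) → L'.BoundedFormula β (g n + 1)}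
    {n} {φ : L.BoundedFormula α n} (hφ : φ.IsQF) : (φ.mapTermRel ft fr h).IsQF :=
  IsQF.recOn hφ isQF_bot (fun h => h.mapTermRel.isQF) fun _ _ h₁ h₂ => h₁.imp h₂

theorem IsAtomic.onBoundedFormula {L' : Language} (Φ : L →ᴸ L') {α : Type*} {n}
    {φ : L.BoundedFormula α n} (hφ : φ.IsAtomic) : (Φ.onBoundedFormula φ).IsAtomic := by
  cases hφ with
  | equal => exact .equal _ _
  | rel => exact .rel _ _

theorem IsQF.onBoundedFormula {L' : Language} (Φ : L →ᴸ L') {α : Type*} {n}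
    {φ : L.BoundedFormula α n} (hφ : φ.IsQF) : (Φ.onBoundedFormula φ).IsQF :=
  IsQF.recOn hφ isQF_bot (fun h => (h.onBoundedFormula Φ).isQF) fun _ _ h₁ h₂ => h₁.imp h₂

end BoundedFormula

theorem Formula.isQF_equivSentence_symm {α : Type*} {φ : L[[α]].Sentence} (hφ : φ.IsQF) :
    (equivSentence.symm φ).IsQF :=
  hφ.mapTermRel.mapTermRel

namespace Theory

variable {T : L.Theory}

theorem models_imp_iff {φ ψ : L.Sentence} : T ⊨ᵇ φ.imp ψ ↔ (T ∪ {φ}) ⊨ᵇ ψ := by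
  rw [models_sentence_iff, models_sentence_iff]
  refine ⟨fun h M => ?_, fun h M => (Sentence.realize_imp _).2 fun hφ => ?_⟩
  · have hM := model_union_iff.1 M.is_model
    exact (Sentence.realize_imp _).1 (h (M.subtheoryModel Set.subset_union_left))
      (model_singleton_iff.1 hM.2)
  · have : M ⊨ T ∪ {φ} := model_union_iff.2 ⟨M.is_model, model_singleton_iff.2 hφ⟩
    exact h (ModelType.of _ M)

theorem not_isSatisfiable_union_pair_iff {φ ψ : L.Sentence} :
    ¬ (T ∪ {φ, ψ}).IsSatisfiable ↔ T ⊨ᵇ φ.imp ψ.not := by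
  rw [models_sentence_iff]
  refine ⟨fun h M => (Sentence.realize_imp _).2 fun hφ hψ => h ?_, fun h ⟨M⟩ => ?_⟩
  · have : M ⊨ T ∪ {φ, ψ} := by
      simp only [model_union_iff, model_insert_iff, model_singleton_iff]
      exact ⟨M.is_model, hφ, hψ⟩
    exact Model.isSatisfiable M
  · have hM := M.is_model
    simp only [model_union_iff, model_insert_iff, model_singleton_iff] at hM
    exact (Sentence.realize_imp _).1 (h (M.subtheoryModel Set.subset_union_left)) hM.2.1 hM.2.2

end Theory

end FirstOrder.Language

namespace PaperFOL

variable {L : FirstOrder.Language.{u, v}} {T Ts : L.Theory}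

noncomputable def allClosure {α : Type*} [Finite α] (φ : L.Formula α) : L.Sentence :=
  (φ.relabel (Sum.inr : α → Empty ⊕ α)).iAlls α

theorem isUniversalSentence_allClosure {α : Type*} [Finite α] {φ : L.Formula α}
    (hφ : φ.IsQF) : IsUniversalSentence (allClosure φ) :=
  ⟨_, _, (hφ.relabel _).relabel _, rfl⟩

-- `α : Type` keeps both sides quantifying over models in the same universe `max u v`.
theorem models_allClosure_iff {α : Type} [Finite α] {φ : L.Formula α} :
    T ⊨ᵇ allClosure φ ↔ T ⊨ᵇ φ := by
  rw [Theory.models_sentence_iff, Theory.models_formula_iff]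
  refine forall_congr' fun M => ?_
  simp [allClosure, Sentence.Realize, Formula.realize_relabel]

theorem liftT_models_iff_models_allClosure {α : Type} [Finite α] {φ : L[[α]].Sentence} :
    liftT α T ⊨ᵇ φ ↔ T ⊨ᵇ allClosure (Formula.equivSentence.symm φ) := by
  rw [models_allClosure_iff,
    Theory.models_formula_iff_onTheory_models_equivSentence (φ := Formula.equivSentence.symm φ),
    Equiv.apply_symm_apply]
  rfl

theorem CoTheories.liftT_models_iff (h : CoTheories T Ts) {α : Type} [Finite α]
    {φ : L[[α]].Sentence} (hφ : φ.IsQF) : liftT α T ⊨ᵇ φ ↔ liftT α Ts ⊨ᵇ φ := by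
  rw [liftT_models_iff_models_allClosure, liftT_models_iff_models_allClosure]
  exact h _ (isUniversalSentence_allClosure (Formula.isQF_equivSentence_symm hφ))

theorem CoTheories.jointlyUnsat_iff (h : CoTheories T Ts) {nc na nb : ℕ}
    {A : (L[[Fin nc ⊕ Fin na]]).Sentence} {B : (L[[Fin nc ⊕ Fin nb]]).Sentence}
    (hA : A.IsQF) (hB : B.IsQF) : JointlyUnsat T A B ↔ JointlyUnsat Ts A B := by
  simp only [JointlyUnsat, Theory.not_isSatisfiable_union_pair_iff]
  exact h.liftT_models_iff ((hA.onBoundedFormula _).imp (hB.onBoundedFormula _).not)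

theorem CoTheories.isGroundInterpolant_iff (h : CoTheories T Ts) {nc na nb : ℕ}
    {A : (L[[Fin nc ⊕ Fin na]]).Sentence} {B : (L[[Fin nc ⊕ Fin nb]]).Sentence}
    {I : (L[[Fin nc]]).Sentence} (hA : A.IsQF) (hB : B.IsQF) :
    IsGroundInterpolant T A B I ↔ IsGroundInterpolant Ts A B I := by
  simp only [IsGroundInterpolant, ← Theory.models_imp_iff, Theory.not_isSatisfiable_union_pair_iff]
  refine and_congr_right fun hI => and_congr ?_ ?_
  · exact h.liftT_models_iff (hA.imp (hI.onBoundedFormula _))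
  · exact h.liftT_models_iff (hB.imp (hI.onBoundedFormula _).not)

theorem CoTheories.groundInterpolation_iff (h : CoTheories T Ts) :
    GroundInterpolation T ↔ GroundInterpolation Ts := by
  refine forall₃_congr fun nc na nb => forall₂_congr fun A B => ?_
  refine forall_congr' fun hA => forall_congr' fun hB => ?_
  exact imp_congr (h.jointlyUnsat_iff hA hB)
    (exists_congr fun _ => h.isGroundInterpolant_iff hA hB)

end PaperFOL

theorem statement_8_general {L : FirstOrder.Language.{u, v}} (T Ts : L.Theory)
    (hmc : PaperFOL.IsModelCompanion.{u, v, max u v} T Ts) :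
    PaperFOL.GroundInterpolation T ↔ PaperFOL.GroundInterpolation Ts :=
  hmc.1.groundInterpolation_iff

/-- a universal theory `T` with a model companion `T*` has ground interpolation
iff `T*` has ground interpolation. -/
theorem statement_8 {L : FirstOrder.Language.{u, v}} (T Ts : L.Theory)
    (hUniv : PaperFOL.IsUniversalTheory T)
    (hmc : PaperFOL.IsModelCompanion.{u, v, max u v} T Ts) :
    PaperFOL.GroundInterpolation T ↔ PaperFOL.GroundInterpolation Ts :=
  statement_8_general T Ts hmc
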